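/- Dynamic regret of entropic OMD under preference drift: with linear losses ℓ_t(w) = g_tᵀw, ‖g_t‖_∞ ≤ c, step sizes η_t = η_0/√(1 + c_η t), and both the time-varying comparators w_t and the OMD iterates ŵ_t lying in the truncated simplex Δ_δ^{K−1}, the dynamic regret Σ_t ℓ_t(ŵ_t) − Σ_t ℓ_t(w_t) is at most √(1 + c_η T)·( (log(1/δ) + L_δ·V_T)/η_0 + c²η_0/c_η ), where V_T = Σ_{t=2}^T ‖w_t − w_{t−1}‖_1 and L_δ = 1 + log(1/δ). -/

import Mathlib

open Real Set InformationTheory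

/-!
Write `KL` for relative entropy. First-order optimality of the mirror step `ŵₜ₊₁` along the
segment towards `wₜ` gives the three-point inequality
`ηₜ⟪gₜ, ŵₜ₊₁ - wₜ⟫ ≤ KL(wₜ‖ŵₜ) - KL(wₜ‖ŵₜ₊₁) - KL(ŵₜ₊₁‖ŵₜ)`, and Pinsker's inequality
together with Young's inequality absorbs `⟪gₜ, ŵₜ - ŵₜ₊₁⟫` into `ηₜc²/2 + KL(ŵₜ₊₁‖ŵₜ)/ηₜ`.
After dividing by `ηₜ` and summing, the divergences telescope except for the comparator moves,
`KL(wₜ₊₁‖ŵₜ₊₁) ≤ KL(wₜ‖ŵₜ₊₁) + L_δ‖wₜ₊₁ - wₜ‖₁`, and for the weight changes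
`1/ηₜ₊₁ - 1/ηₜ ≥ 0`, which are paid for with `KL ≤ log(1/δ)` on the truncated simplex.

Pinsker's inequality comes from the pointwise bound `klFun t ≥ 3(t-1)²/(2t+4)`, whose gap is
convex on `(0, ∞)` with a critical point at `1`, summed by Sedrakyan's form of Cauchy–Schwarz.
-/

noncomputable def pinskerGap (t : ℝ) : ℝ := klFun t - 3 * (t - 1) ^ 2 / (2 * t + 4)

lemma hasDerivAt_pinskerGap {t : ℝ} (ht : 0 < t) :
    HasDerivAt pinskerGap (log t - 6 * (t - 1) * (t + 5) / (2 * t + 4) ^ 2) t := by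
  have hquad : HasDerivAt (fun t : ℝ => 3 * (t - 1) ^ 2) (3 * (2 * (t - 1) ^ 1 * 1)) t :=
    (((hasDerivAt_id t).sub_const 1).pow 2).const_mul 3
  have hlin : HasDerivAt (fun t : ℝ => 2 * t + 4) (2 * 1) t :=
    ((hasDerivAt_id t).const_mul 2).add_const 4
  refine ((hasDerivAt_klFun ht.ne').sub (hquad.div hlin (by positivity))).congr_deriv ?_
  field_simp
  ring

lemma hasDerivAt_pinskerGap_deriv {t : ℝ} (ht : 0 < t) :
    HasDerivAt (fun t => log t - 6 * (t - 1) * (t + 5) / (2 * t + 4) ^ 2)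
      ((t - 1) ^ 2 * (t + 8) / (t * (t + 2) ^ 3)) t := by
  have hnum : HasDerivAt (fun t : ℝ => 6 * (t - 1) * (t + 5))
      (6 * 1 * (t + 5) + 6 * (t - 1) * 1) t :=
    (((hasDerivAt_id t).sub_const 1).const_mul 6).mul ((hasDerivAt_id t).add_const 5)
  have hden : HasDerivAt (fun t : ℝ => (2 * t + 4) ^ 2) (2 * (2 * t + 4) ^ 1 * (2 * 1)) t :=
    (((hasDerivAt_id t).const_mul 2).add_const 4).pow 2
  refine ((hasDerivAt_log ht.ne').sub (hnum.div hden (by positivity))).congr_deriv ?_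
  field_simp
  ring

lemma convexOn_pinskerGap : ConvexOn ℝ (Ioi 0) pinskerGap := by
  refine convexOn_of_hasDerivWithinAt2_nonneg (convex_Ioi 0)
    (fun t ht => (hasDerivAt_pinskerGap ht).continuousAt.continuousWithinAt)
    (f' := fun t => log t - 6 * (t - 1) * (t + 5) / (2 * t + 4) ^ 2)
    (f'' := fun t => (t - 1) ^ 2 * (t + 8) / (t * (t + 2) ^ 3)) ?_ ?_ ?_ <;>
    simp only [interior_Ioi, mem_Ioi]
  · exact fun t ht => (hasDerivAt_pinskerGap ht).hasDerivWithinAt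
  · exact fun t ht => (hasDerivAt_pinskerGap_deriv ht).hasDerivWithinAt
  · intro t ht
    have : 0 < t + 8 := by linarith
    positivity

lemma pinskerGap_nonneg {t : ℝ} (ht : 0 < t) : 0 ≤ pinskerGap t := by
  have hmin : IsMinOn pinskerGap (Ioi 0) 1 := by
    refine convexOn_pinskerGap.isMinOn_of_rightDeriv_eq_zero (by simp) ?_
    rw [(hasDerivAt_pinskerGap one_pos).hasDerivWithinAt.derivWithin (uniqueDiffWithinAt_Ioi 1)]
    norm_num
  simpa [pinskerGap, klFun_one] using hmin (mem_Ioi.2 ht)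

lemma three_mul_sq_sub_one_div_le_klFun {t : ℝ} (ht : 0 ≤ t) :
    3 * (t - 1) ^ 2 / (2 * t + 4) ≤ klFun t := by
  rcases ht.eq_or_lt with rfl | ht
  · norm_num [klFun_zero]
  · simpa [pinskerGap] using pinskerGap_nonneg ht

lemma hasDerivAt_mul_log_div {x q : ℝ} (hx : x ≠ 0) (hq : q ≠ 0) :
    HasDerivAt (fun x => x * log (x / q)) (log (x / q) + 1) x := by
  refine ((hasDerivAt_id x).mul ((hasDerivAt_id x).div_const q |>.log
    (div_ne_zero hx hq))).congr_deriv ?_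
  field_simp
  simp [hx]

lemma mul_log_div_sub_mul_log_div_le {δ x y q : ℝ} (hδ : 0 < δ) (hx : x ∈ Icc δ 1)
    (hy : y ∈ Icc δ 1) (hq : q ∈ Icc δ 1) :
    x * log (x / q) - y * log (y / q) ≤ (1 + log (1 / δ)) * |x - y| := by
  have hq0 : 0 < q := hδ.trans_le hq.1
  have hderiv : ∀ z ∈ Icc δ 1,
      HasDerivWithinAt (fun x => x * log (x / q)) (log (z / q) + 1) (Icc δ 1) z :=
    fun z hz => (hasDerivAt_mul_log_div (hδ.trans_le hz.1).ne' hq0.ne').hasDerivWithinAt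
  have hbound : ∀ z ∈ Icc δ 1, ‖log (z / q) + 1‖ ≤ 1 + log (1 / δ) := by
    intro z hz
    have hz0 : 0 < z := hδ.trans_le hz.1
    have := log_le_log hδ hz.1
    have := log_le_log hδ hq.1
    have := log_nonpos hz0.le hz.2
    have := log_nonpos hq0.le hq.2
    rw [norm_eq_abs, abs_le, log_div hz0.ne' hq0.ne', one_div, log_inv]
    constructor <;> linarith
  have := (convex_Icc δ 1).norm_image_sub_le_of_norm_hasDerivWithin_le hderiv hbound hy hx
  rw [norm_eq_abs, norm_eq_abs] at this
  exact (le_abs_self _).trans this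

lemma IsMinOn.hasDerivAt_nonneg {φ : ℝ → ℝ} {D a b : ℝ} (h : IsMinOn φ (Icc a b) a)
    (hab : a < b) (hφ : HasDerivAt φ D a) : 0 ≤ D := by
  have hdir : b - a ∈ posTangentConeAt (Icc a b) a :=
    mem_posTangentConeAt_of_segment_subset (by simp [segment_eq_Icc hab.le])
  have := h.localize.hasFDerivWithinAt_nonneg hφ.hasFDerivAt.hasFDerivWithinAt hdir
  simp only [ContinuousLinearMap.toSpanSingleton_apply, smul_eq_mul] at this
  exact (mul_nonneg_iff_of_pos_left (sub_pos.2 hab)).1 this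

lemma sum_Icc_sub_div_le {A B V η : ℕ → ℝ} {L : ℝ} (hA : A 1 ≤ L) (hB : ∀ t, B t ≤ L)
    (hAB : ∀ t, A (t + 1) ≤ B t + V (t + 1)) (hV : ∀ t, 0 ≤ V t) (hη : ∀ t, 0 < η t)
    (hη_anti : ∀ t, η (t + 1) ≤ η t) {T : ℕ} (hT : 1 ≤ T) :
    ∑ t ∈ Finset.Icc 1 T, (A t - B t) / η t
      ≤ (L + ∑ t ∈ Finset.Icc 2 T, V t) / η T - B T / η T := by
  induction T, hT using Nat.le_induction with
  | base =>
    simp only [Finset.Icc_self, Finset.sum_singleton, Finset.Icc_eq_empty_of_lt one_lt_two,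
      Finset.sum_empty, add_zero, ← sub_div]
    exact div_le_div_of_nonneg_right (sub_le_sub_right hA (B 1)) (hη 1).le
  | succ n hn ih =>
    set S := ∑ t ∈ Finset.Icc 2 n, V t
    have hS : 0 ≤ S := Finset.sum_nonneg fun t _ => hV t
    have hshift : (L + S) / η n - B n / η n ≤ (L + S - B n) / η (n + 1) := by
      rw [← sub_div]
      exact div_le_div_of_nonneg_left (by linarith [hB n]) (hη (n + 1)) (hη_anti n)
    have hlast : (L + S - B n) / η (n + 1) + (A (n + 1) - B (n + 1)) / η (n + 1)
        ≤ (L + (S + V (n + 1)) - B (n + 1)) / η (n + 1) := by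
      rw [← add_div]
      exact div_le_div_of_nonneg_right (by linarith [hAB n]) (hη (n + 1)).le
    rw [Finset.sum_Icc_succ_top (by omega), Finset.sum_Icc_succ_top (by omega), ← sub_div]
    linarith

lemma sum_Icc_inv_sqrt_le {c : ℝ} (hc : 0 < c) (T : ℕ) :
    ∑ t ∈ Finset.Icc 1 T, 1 / √(1 + c * t) ≤ 2 / c * (√(1 + c * T) - 1) := by
  induction T with
  | zero => simp
  | succ n ih =>
    have hstep : 1 / √(1 + c * (n + 1)) ≤ 2 / c * (√(1 + c * (n + 1)) - √(1 + c * n)) := by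
      have ha := sq_sqrt (by positivity : 0 ≤ 1 + c * n)
      have hb := sq_sqrt (by positivity : 0 ≤ 1 + c * (n + 1))
      have hb_pos : 0 < √(1 + c * (n + 1)) := sqrt_pos.2 (by positivity)
      have hab : √(1 + c * n) ≤ √(1 + c * (n + 1)) := sqrt_le_sqrt (by linarith)
      rw [div_le_iff₀ hb_pos, div_mul_eq_mul_div, div_mul_eq_mul_div, le_div_iff₀ hc]
      nlinarith [sq_nonneg (√(1 + c * (n + 1)) - √(1 + c * n))]
    rw [Finset.sum_Icc_succ_top (by omega)]
    push_cast
    linarith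

section

variable {ι : Type*} [Fintype ι]

noncomputable def relEntropy (p q : ι → ℝ) : ℝ := ∑ i, p i * log (p i / q i)

lemma relEntropy_eq_sum_mul_klFun {p q : ι → ℝ} (hq : ∀ i, q i ≠ 0)
    (hpq : ∑ i, p i = ∑ i, q i) : relEntropy p q = ∑ i, q i * klFun (p i / q i) := by
  have hterm : ∀ i, q i * klFun (p i / q i) = p i * log (p i / q i) + (q i - p i) := by
    intro i
    rw [klFun_apply, mul_sub, mul_add, ← mul_assoc, mul_div_cancel₀ _ (hq i)]
    ring
  rw [relEntropy, Finset.sum_congr rfl fun i _ => hterm i, Finset.sum_add_distrib,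
    Finset.sum_sub_distrib, hpq, sub_self, add_zero]

lemma relEntropy_nonneg {p q : ι → ℝ} (hp : p ∈ stdSimplex ℝ ι) (hq : ∀ i, 0 < q i)
    (hq1 : ∑ i, q i = 1) : 0 ≤ relEntropy p q := by
  rw [relEntropy_eq_sum_mul_klFun (fun i => (hq i).ne') (hp.2.trans hq1.symm)]
  exact Finset.sum_nonneg fun i _ =>
    mul_nonneg (hq i).le (klFun_nonneg (div_nonneg (hp.1 i) (hq i).le))

/-- **Pinsker's inequality**. -/
lemma sq_sum_abs_sub_div_two_le_relEntropy {p q : ι → ℝ} (hp : p ∈ stdSimplex ℝ ι)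
    (hq : ∀ i, 0 < q i) (hq1 : ∑ i, q i = 1) :
    (∑ i, |p i - q i|) ^ 2 / 2 ≤ relEntropy p q := by
  have hden : ∀ i ∈ Finset.univ, 0 < 2 * p i + 4 * q i := fun i _ => by
    linarith [hp.1 i, hq i]
  have hden_sum : ∑ i, (2 * p i + 4 * q i) = 6 := by
    rw [Finset.sum_add_distrib, ← Finset.mul_sum, ← Finset.mul_sum, hp.2, hq1]
    norm_num
  have hterm : ∀ i, 3 * (|p i - q i| ^ 2 / (2 * p i + 4 * q i))
      ≤ q i * klFun (p i / q i) := by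
    intro i
    have hqi := (hq i).ne'
    calc 3 * (|p i - q i| ^ 2 / (2 * p i + 4 * q i))
        = q i * (3 * (p i / q i - 1) ^ 2 / (2 * (p i / q i) + 4)) := by
          rw [sq_abs]
          field_simp
      _ ≤ q i * klFun (p i / q i) := mul_le_mul_of_nonneg_left
          (three_mul_sq_sub_one_div_le_klFun (div_nonneg (hp.1 i) (hq i).le)) (hq i).le
  calc (∑ i, |p i - q i|) ^ 2 / 2
      = 3 * ((∑ i, |p i - q i|) ^ 2 / ∑ i, (2 * p i + 4 * q i)) := by
        rw [hden_sum]
        ring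
    _ ≤ 3 * ∑ i, |p i - q i| ^ 2 / (2 * p i + 4 * q i) := by
        gcongr
        exact Finset.sq_sum_div_le_sum_sq_div _ _ hden
    _ ≤ relEntropy p q := by
        rw [relEntropy_eq_sum_mul_klFun (fun i => (hq i).ne') (hp.2.trans hq1.symm),
          Finset.mul_sum]
        exact Finset.sum_le_sum fun i _ => hterm i

lemma relEntropy_le_log_inv {δ : ℝ} {p q : ι → ℝ} (hp : p ∈ stdSimplex ℝ ι) (hδ : 0 < δ)
    (hq : ∀ i, δ ≤ q i) : relEntropy p q ≤ log (1 / δ) := by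
  have hterm : ∀ i, p i * log (p i / q i) ≤ p i * log (1 / δ) := by
    intro i
    rcases (hp.1 i).eq_or_lt with hpi | hpi
    · simp [← hpi]
    have hqi : 0 < q i := hδ.trans_le (hq i)
    refine mul_le_mul_of_nonneg_left (log_le_log (div_pos hpi hqi) ?_) hpi.le
    exact div_le_div₀ zero_le_one (mem_Icc_of_mem_stdSimplex hp i).2 hδ (hq i)
  calc relEntropy p q ≤ ∑ i, p i * log (1 / δ) := Finset.sum_le_sum fun i _ => hterm i
    _ = log (1 / δ) := by rw [← Finset.sum_mul, hp.2, one_mul]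

lemma relEntropy_sub_relEntropy_le {δ : ℝ} {p p' q : ι → ℝ} (hδ : 0 < δ)
    (hp : ∀ i, p i ∈ Icc δ 1) (hp' : ∀ i, p' i ∈ Icc δ 1) (hq : ∀ i, q i ∈ Icc δ 1) :
    relEntropy p q - relEntropy p' q ≤ (1 + log (1 / δ)) * ∑ i, |p i - p' i| := by
  rw [relEntropy, relEntropy, ← Finset.sum_sub_distrib, Finset.mul_sum]
  exact Finset.sum_le_sum fun i _ => mul_log_div_sub_mul_log_div_le hδ (hp i) (hp' i) (hq i)

lemma relEntropy_sub_relEntropy_eq {q q' : ι → ℝ} (hq : ∀ i, q i ≠ 0) (hq' : ∀ i, q' i ≠ 0)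
    (w : ι → ℝ) : relEntropy w q - relEntropy w q' = ∑ i, w i * log (q' i / q i) := by
  rw [relEntropy, relEntropy, ← Finset.sum_sub_distrib]
  refine Finset.sum_congr rfl fun i _ => ?_
  rcases eq_or_ne (w i) 0 with hw | hw
  · simp [hw]
  · rw [log_div hw (hq i), log_div hw (hq' i), log_div (hq' i) (hq i)]
    ring

def IsEntropicMirrorStep (η : ℝ) (g q q' : ι → ℝ) : Prop :=
  IsMinOn (fun u => η * ∑ i, g i * u i + relEntropy u q) (stdSimplex ℝ ι) q'

lemma IsEntropicMirrorStep.add_relEntropy_le {η : ℝ} {g q q' w : ι → ℝ}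
    (h : IsEntropicMirrorStep η g q q') (hq : ∀ i, 0 < q i) (hq'_pos : ∀ i, 0 < q' i)
    (hq' : q' ∈ stdSimplex ℝ ι) (hw : w ∈ stdSimplex ℝ ι) :
    η * ∑ i, g i * q' i + relEntropy q' q + relEntropy w q'
      ≤ η * ∑ i, g i * w i + relEntropy w q := by
  set d := w - q'
  have hline : ∀ i, HasDerivAt (fun s : ℝ => q' i + s * d i) (d i) 0 := fun i => by
    simpa using ((hasDerivAt_id (0 : ℝ)).mul_const (d i)).const_add (q' i)
  have hderiv : HasDerivAt
      (fun s : ℝ => η * ∑ i, g i * (q' + s • d) i + relEntropy (q' + s • d) q)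
      (η * ∑ i, g i * d i + ∑ i, (log (q' i / q i) + 1) * d i) 0 := by
    refine ((HasDerivAt.fun_sum fun i _ => (hline i).const_mul (g i)).const_mul η).add
      (HasDerivAt.fun_sum fun i _ => ?_)
    exact (hasDerivAt_mul_log_div (hq'_pos i).ne' (hq i).ne').comp_of_eq 0 (hline i) (by simp)
  have hmin : IsMinOn (fun s : ℝ => η * ∑ i, g i * (q' + s • d) i + relEntropy (q' + s • d) q)
      (Icc 0 1) 0 :=
    h.comp_mapsTo (fun s hs => convex_stdSimplex ℝ ι |>.add_smul_sub_mem hq' hw hs) (by simp)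
  have hfirst := hmin.hasDerivAt_nonneg zero_lt_one hderiv
  have hd_sum : ∑ i, d i = 0 := by simp [d, Finset.sum_sub_distrib, hw.2, hq'.2]
  have hcross := relEntropy_sub_relEntropy_eq (fun i => (hq i).ne') (fun i => (hq'_pos i).ne') w
  simp only [d, Pi.sub_apply, mul_sub, add_mul, one_mul, Finset.sum_sub_distrib,
    Finset.sum_add_distrib, mul_comm (log _)] at hfirst hd_sum
  simp only [relEntropy] at hcross ⊢
  linarith

lemma sum_mul_le_norm_mul_sum_abs (g x : ι → ℝ) : ∑ i, g i * x i ≤ ‖g‖ * ∑ i, |x i| := by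
  rw [Finset.mul_sum]
  refine Finset.sum_le_sum fun i _ => ?_
  calc g i * x i ≤ |g i| * |x i| := by rw [← abs_mul]; exact le_abs_self _
    _ ≤ ‖g‖ * |x i| := by
      gcongr
      exact norm_le_pi_norm g i

lemma IsEntropicMirrorStep.sum_mul_sub_sum_mul_le {η c : ℝ} {g q q' w : ι → ℝ}
    (h : IsEntropicMirrorStep η g q q') (hη : 0 < η) (hg : ‖g‖ ≤ c) (hq : ∀ i, 0 < q i)
    (hq1 : ∑ i, q i = 1) (hq'_pos : ∀ i, 0 < q' i) (hq' : q' ∈ stdSimplex ℝ ι)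
    (hw : w ∈ stdSimplex ℝ ι) :
    ∑ i, g i * q i - ∑ i, g i * w i
      ≤ η * c ^ 2 / 2 + (relEntropy w q - relEntropy w q') / η := by
  set X := ∑ i, |q' i - q i|
  have hthree := h.add_relEntropy_le hq hq'_pos hq' hw
  have hpinsker : X ^ 2 / 2 ≤ relEntropy q' q := sq_sum_abs_sub_div_two_le_relEntropy hq' hq hq1
  have hdual : ∑ i, g i * q i - ∑ i, g i * q' i ≤ c * X := by
    have := sum_mul_le_norm_mul_sum_abs g (q - q')
    simp only [Pi.sub_apply, mul_sub, Finset.sum_sub_distrib, abs_sub_comm (q _)] at this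
    exact this.trans (mul_le_mul_of_nonneg_right hg (by positivity))
  -- Young: η c X - X² / 2 ≤ η² c² / 2.
  have hscaled : η * (∑ i, g i * q i - ∑ i, g i * w i)
      ≤ η ^ 2 * c ^ 2 / 2 + (relEntropy w q - relEntropy w q') := by
    nlinarith [sq_nonneg (X - η * c), mul_le_mul_of_nonneg_left hdual hη.le]
  calc _ ≤ (η ^ 2 * c ^ 2 / 2 + (relEntropy w q - relEntropy w q')) / η := by
        rw [le_div_iff₀ hη]
        linarith
    _ = _ := by field_simp

lemma dynamic_regret_le_of_isEntropicMirrorStep {δ c : ℝ} {T : ℕ} {η : ℕ → ℝ}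
    {g what w : ℕ → ι → ℝ} (hδ : 0 < δ) (hT : 1 ≤ T) (hg : ∀ t, ‖g t‖ ≤ c)
    (hη : ∀ t, 0 < η t) (hη_anti : ∀ t, η (t + 1) ≤ η t)
    (hwhat : ∀ t, what t ∈ stdSimplex ℝ ι) (hwhatδ : ∀ t i, δ ≤ what t i)
    (hstep : ∀ t, IsEntropicMirrorStep (η t) (g t) (what t) (what (t + 1)))
    (hw : ∀ t, w t ∈ stdSimplex ℝ ι) (hwδ : ∀ t i, δ ≤ w t i) :
    ∑ t ∈ Finset.Icc 1 T, ∑ i, g t i * what t i - ∑ t ∈ Finset.Icc 1 T, ∑ i, g t i * w t i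
      ≤ c ^ 2 / 2 * ∑ t ∈ Finset.Icc 1 T, η t + (log (1 / δ) + (1 + log (1 / δ))
          * ∑ t ∈ Finset.Icc 2 T, ∑ i, |w t i - w (t - 1) i|) / η T := by
  have hwhat_pos : ∀ t i, 0 < what t i := fun t i => hδ.trans_le (hwhatδ t i)
  have hw_Icc : ∀ t i, w t i ∈ Icc δ 1 :=
    fun t i => ⟨hwδ t i, (mem_Icc_of_mem_stdSimplex (hw t) i).2⟩
  have hwhat_Icc : ∀ t i, what t i ∈ Icc δ 1 :=
    fun t i => ⟨hwhatδ t i, (mem_Icc_of_mem_stdSimplex (hwhat t) i).2⟩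
  have hlog : 0 ≤ log (1 / δ) := (relEntropy_nonneg (hw 0) (hwhat_pos 0) (hwhat 0).2).trans
    (relEntropy_le_log_inv (hw 0) hδ (hwhatδ 0))
  have hregret : ∀ t, ∑ i, g t i * what t i - ∑ i, g t i * w t i ≤ η t * c ^ 2 / 2
      + (relEntropy (w t) (what t) - relEntropy (w t) (what (t + 1))) / η t := fun t =>
    (hstep t).sum_mul_sub_sum_mul_le (hη t) (hg t) (hwhat_pos t) (hwhat t).2
      (hwhat_pos (t + 1)) (hwhat (t + 1)) (hw t)
  have htel := sum_Icc_sub_div_le (A := fun t => relEntropy (w t) (what t))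
    (B := fun t => relEntropy (w t) (what (t + 1)))
    (V := fun t => (1 + log (1 / δ)) * ∑ i, |w t i - w (t - 1) i|)
    (relEntropy_le_log_inv (hw 1) hδ (hwhatδ 1))
    (fun t => relEntropy_le_log_inv (hw t) hδ (hwhatδ (t + 1)))
    (fun t => by
      have := relEntropy_sub_relEntropy_le hδ (hw_Icc (t + 1)) (hw_Icc t) (hwhat_Icc (t + 1))
      simp only [add_tsub_cancel_right]
      linarith)
    (fun t => by positivity) hη hη_anti hT
  rw [← Finset.mul_sum] at htel
  have hB_T : 0 ≤ relEntropy (w T) (what (T + 1)) / η T :=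
    div_nonneg (relEntropy_nonneg (hw T) (hwhat_pos (T + 1)) (hwhat (T + 1)).2) (hη T).le
  rw [← Finset.sum_sub_distrib, Finset.mul_sum]
  calc ∑ t ∈ Finset.Icc 1 T, (∑ i, g t i * what t i - ∑ i, g t i * w t i)
      ≤ ∑ t ∈ Finset.Icc 1 T, (c ^ 2 / 2 * η t
          + (relEntropy (w t) (what t) - relEntropy (w t) (what (t + 1))) / η t) :=
        Finset.sum_le_sum fun t _ => (hregret t).trans_eq (by ring)
    _ ≤ _ := by
        rw [Finset.sum_add_distrib]
        linarith

end

theorem omd_dynamic_regret_general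
    (K : ℕ) (T : ℕ) (hT : 1 ≤ T)
    (c η0 cη δ : ℝ) (hη0 : 0 < η0) (hcη : 0 < cη)
    (hδ0 : 0 < δ)
    (g : ℕ → Fin K → ℝ) (hg : ∀ t, ‖(g t : Fin K → ℝ)‖ ≤ c)
    (η : ℕ → ℝ) (hη : ∀ t, η t = η0 / Real.sqrt (1 + cη * t))
    (what : ℕ → Fin K → ℝ)
    (hwhatδ : ∀ t k, δ ≤ what t k) (hwhat1 : ∀ t, ∑ k, what t k = 1)
    (hupdate : ∀ t, ∀ w : Fin K → ℝ, (∀ k, 0 ≤ w k) → (∑ k, w k = 1) →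
      η t * (∑ k, g t k * what (t + 1) k)
          + ∑ k, what (t + 1) k * Real.log (what (t + 1) k / what t k)
        ≤ η t * (∑ k, g t k * w k)
          + ∑ k, w k * Real.log (w k / what t k))
    (w : ℕ → Fin K → ℝ)
    (hwδ : ∀ t k, δ ≤ w t k) (hw1 : ∀ t, ∑ k, w t k = 1) :
    (∑ t ∈ Finset.Icc 1 T, ∑ k, g t k * what t k)
        - ∑ t ∈ Finset.Icc 1 T, ∑ k, g t k * w t k
      ≤ Real.sqrt (1 + cη * T)
          * ((Real.log (1 / δ)
                + (1 + Real.log (1 / δ))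
                    * ∑ t ∈ Finset.Icc 2 T, ∑ k, |w t k - w (t - 1) k|) / η0
              + c ^ 2 * η0 / cη) := by
  have hη_pos : ∀ t, 0 < η t := fun t => by rw [hη t]; positivity
  have hη_anti : ∀ t, η (t + 1) ≤ η t := fun t => by
    rw [hη t, hη (t + 1)]
    gcongr
    linarith
  have hregret := dynamic_regret_le_of_isEntropicMirrorStep hδ0 hT hg hη_pos hη_anti
    (fun t => ⟨fun k => hδ0.le.trans (hwhatδ t k), hwhat1 t⟩) hwhatδ
    (fun t => isMinOn_iff.2 fun u hu => hupdate t u hu.1 hu.2)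
    (fun t => ⟨fun k => hδ0.le.trans (hwδ t k), hw1 t⟩) hwδ
  have hη_sum : ∑ t ∈ Finset.Icc 1 T, η t ≤ η0 * (2 / cη * (√(1 + cη * T) - 1)) := by
    simp only [hη, div_eq_mul_one_div η0, ← Finset.mul_sum]
    exact mul_le_mul_of_nonneg_left (sum_Icc_inv_sqrt_le hcη T) hη0.le
  have hs : 0 < √(1 + cη * T) := sqrt_pos.2 (by positivity)
  have hc2 : 0 ≤ c ^ 2 * η0 / cη := by positivity
  calc _ ≤ _ := hregret
    _ ≤ c ^ 2 / 2 * (η0 * (2 / cη * (√(1 + cη * T) - 1))) + (log (1 / δ) + (1 + log (1 / δ))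
          * ∑ t ∈ Finset.Icc 2 T, ∑ k, |w t k - w (t - 1) k|) / η T := by
        gcongr
    _ ≤ _ := by
        rw [hη T, div_div_eq_mul_div]
        field_simp
        nlinarith

/-- Dynamic regret bound of entropic online mirror descent under preference
drift, with path-length V_T and L_δ = 1 + log(1/δ). -/
theorem omd_dynamic_regret
    (K : ℕ) (T : ℕ) (hT : 1 ≤ T)
    (c η0 cη δ : ℝ) (hc : 0 < c) (hη0 : 0 < η0) (hcη : 0 < cη)
    (hδ0 : 0 < δ) (hδK : δ ≤ 1 / K)
    (g : ℕ → Fin K → ℝ) (hg : ∀ t, ‖(g t : Fin K → ℝ)‖ ≤ c)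
    (η : ℕ → ℝ) (hη : ∀ t, η t = η0 / Real.sqrt (1 + cη * t))
    (what : ℕ → Fin K → ℝ)
    (hwhatδ : ∀ t k, δ ≤ what t k) (hwhat1 : ∀ t, ∑ k, what t k = 1)
    (hupdate : ∀ t, ∀ w : Fin K → ℝ, (∀ k, 0 ≤ w k) → (∑ k, w k = 1) →
      η t * (∑ k, g t k * what (t + 1) k)
          + ∑ k, what (t + 1) k * Real.log (what (t + 1) k / what t k)
        ≤ η t * (∑ k, g t k * w k)
          + ∑ k, w k * Real.log (w k / what t k))
    (w : ℕ → Fin K → ℝ)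
    (hwδ : ∀ t k, δ ≤ w t k) (hw1 : ∀ t, ∑ k, w t k = 1) :
    (∑ t ∈ Finset.Icc 1 T, ∑ k, g t k * what t k)
        - ∑ t ∈ Finset.Icc 1 T, ∑ k, g t k * w t k
      ≤ Real.sqrt (1 + cη * T)
          * ((Real.log (1 / δ)
                + (1 + Real.log (1 / δ))
                    * ∑ t ∈ Finset.Icc 2 T, ∑ k, |w t k - w (t - 1) k|) / η0
              + c ^ 2 * η0 / cη) :=
  omd_dynamic_regret_general K T hT c η0 cη δ hη0 hcη hδ0 g hg η hη what hwhatδ hwhat1 hupdate w hwδ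
    hw1
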